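/- arXiv:1701.04288 — 7 statements merged into one kernel-verified Lean document; each statement's English description precedes it below -/
import Mathlib

section
/- Let Σ₄ = {a₁,a₂,a₃,a₄, ā₁,ā₂,ā₃,ā₄, b₁,b₂,b₃,b₄, b̄₁,b̄₂,b̄₃,b̄₄} be an alphabet with 16 letters, and let L₄ = { x₄·x₃·x₂·x₁·x̄₁·x̄₂·x̄₃·x̄₄ : for each i ∈ {1,2,3,4}, (xᵢ, x̄ᵢ) = (aᵢ, āᵢ) or (xᵢ, x̄ᵢ) = (bᵢ, b̄ᵢ) } (a set of 16 words of length 8), and let T₄ = L₄ \ { b₄·b₃·b₂·b₁·b̄₁·b̄₂·b̄₃·b̄₄ } (a set of 15 words). Then T₄ is a test set for L₄: for any alphabet Γ and any two monoid homomorphisms f, g : Σ₄* → Γ*, if f(w) = g(w) for every w ∈ T₄, then f(w) = g(w) for every w ∈ L₄. -/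
/-!
Embed `Γ*` into the free group on `Γ`, so that it suffices to treat homomorphisms `F`, `G` into a
free group. For a word `x₄ u x̄₄ ∈ L₄` with inner factor `u = x₃x₂x₁x̄₁x̄₂x̄₃`, the two equations
for `x₄ = a₄` and `x₄ = b₄` with the same `u` say exactly that `F u` conjugates a fixed element `Z`
to a fixed element `A`. The equation for `a₄` is always available, so it remains to show this for
`u = b₃b₂b₁b̄₁b̄₂b̄₃`, knowing it for the seven other `u`. If `A = 1` then `Z = 1`. Otherwise every
`F u · (F u')⁻¹` commutes with `A`; those where `u` and `u'` differ only in `x₁` are the four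
conjugates of one element by the values `F (x₃x₂)`, three of which are known to commute with `A`.
Two properties of free groups force the fourth one to commute with `A` too: commutation is
transitive on nontrivial elements, and if `x a x⁻¹` commutes with `a ≠ 1` then so does `x`. Both
hold because the centralizer of a nontrivial element is cyclic: it is free by Nielsen–Schreier,
and a free group with nontrivial centre has at most one generator.
-/

/-- The alphabet `Σ₄` with 16 letters.  A letter `(b?, bar?, i)` represents:
`aᵢ₊₁` if `b? = false, bar? = false`; `āᵢ₊₁` if `b? = false, bar? = true`;
`bᵢ₊₁` if `b? = true, bar? = false`; `b̄ᵢ₊₁` if `b? = true, bar? = true`. -/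
abbrev Sigma4 : Type := Bool × Bool × Fin 4

/-- The word `x₄·x₃·x₂·x₁·x̄₁·x̄₂·x̄₃·x̄₄ ∈ L₄` determined by the choice `s : Fin 4 → Bool`
(`s i = false` means `(xᵢ₊₁, x̄ᵢ₊₁) = (aᵢ₊₁, āᵢ₊₁)`, `s i = true` means
`(xᵢ₊₁, x̄ᵢ₊₁) = (bᵢ₊₁, b̄ᵢ₊₁)`). -/
def word4 (s : Fin 4 → Bool) : FreeMonoid Sigma4 :=
  FreeMonoid.ofList
    [(s 3, false, 3), (s 2, false, 2), (s 1, false, 1), (s 0, false, 0),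
     (s 0, true, 0), (s 1, true, 1), (s 2, true, 2), (s 3, true, 3)]

/-- The language `L₄` of 16 words. -/
def L4 : Set (FreeMonoid Sigma4) := Set.range word4

/-- The set `T₄ = L₄ \ {b₄·b₃·b₂·b₁·b̄₁·b̄₂·b̄₃·b̄₄}` of 15 words. -/
def T4 : Set (FreeMonoid Sigma4) := L4 \ {word4 (fun _ => true)}

namespace FreeGroup

variable {α : Type*}

theorem not_commute_of_ne {s t : α} (hst : s ≠ t) : ¬Commute (of s) (of t) := by
  classical
  intro h
  have := h.map
    (FreeGroup.lift fun x => if x = s then Equiv.swap (0 : Fin 3) 1 else Equiv.swap 1 2)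
  simp only [lift_apply_of, if_pos, if_neg hst.symm] at this
  exact absurd this.eq (by decide)

theorem isCyclic_of_subsingleton [Subsingleton α] : IsCyclic (FreeGroup α) := by
  obtain ⟨g, hg⟩ : ∃ g : FreeGroup α, ∀ t, of t = g := by
    rcases isEmpty_or_nonempty α with _ | ⟨⟨s⟩⟩
    · exact ⟨1, isEmptyElim⟩
    · exact ⟨of s, fun t => by rw [Subsingleton.elim t s]⟩
  refine ⟨g, fun x => ?_⟩
  change x ∈ Subgroup.zpowers g
  induction x using FreeGroup.induction_on with
  | C1 => exact one_mem _
  | of t => exact hg t ▸ Subgroup.mem_zpowers g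
  | inv_of _ ht => exact inv_mem ht
  | mul _ _ hx hy => exact mul_mem hx hy

def exponentSum [DecidableEq α] (s : α) : FreeGroup α →* Multiplicative ℤ :=
  FreeGroup.lift (Pi.mulSingle s (Multiplicative.ofAdd 1))

@[simp]
theorem exponentSum_of_self [DecidableEq α] (s : α) : exponentSum s (of s) = .ofAdd 1 := by
  simp [exponentSum]

@[simp]
theorem exponentSum_of_of_ne [DecidableEq α] {s t : α} (h : t ≠ s) :
    exponentSum s (of t) = 1 := by
  simp [exponentSum, h]

end FreeGroup

namespace IsFreeGroup

variable (G : Type*) [Group G] [IsFreeGroup G]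

theorem isCyclic_of_subsingleton_generators [Subsingleton (Generators G)] : IsCyclic G :=
  have := FreeGroup.isCyclic_of_subsingleton (α := Generators G)
  isCyclic_of_surjective (toFreeGroup G).symm (toFreeGroup G).symm.surjective

theorem isCyclic_of_isMulCommutative [IsMulCommutative G] : IsCyclic G := by
  have : Subsingleton (Generators G) := ⟨fun s t => by
    by_contra hst
    apply FreeGroup.not_commute_of_ne hst
    have hc : Commute ((toFreeGroup G).symm (.of s)) ((toFreeGroup G).symm (.of t)) :=
      mul_comm' _ _
    simpa using hc.map (toFreeGroup G)⟩
  exact isCyclic_of_subsingleton_generators G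

end IsFreeGroup

namespace FreeGroup

variable {α : Type*}

theorem mem_zpowers_of_commute_of {z : FreeGroup α} {s : α} (h : Commute z (of s)) :
    z ∈ Subgroup.zpowers (of s) := by
  classical
  set H := Subgroup.closure {z, of s}
  have : IsMulCommutative H := Subgroup.isMulCommutative_closure (by
    simp only [Set.mem_insert_iff, Set.mem_singleton_iff]
    rintro _ (rfl | rfl) _ (rfl | rfl) <;> first | rfl | exact h.eq | exact h.eq.symm)
  obtain ⟨w, hw⟩ := (H.isCyclic_iff_exists_zpowers_eq_top).mp
    (IsFreeGroup.isCyclic_of_isMulCommutative H)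
  obtain ⟨j, hj⟩ : ∃ j : ℤ, w ^ j = of s :=
    Subgroup.mem_zpowers_iff.mp (hw ▸ Subgroup.subset_closure (by simp))
  have hjj : j * j = 1 := by
    have := congrArg (fun x => Multiplicative.toAdd (exponentSum s x)) hj
    simp only [map_zpow, toAdd_zpow, exponentSum_of_self, toAdd_ofAdd] at this
    rcases Int.eq_one_or_neg_one_of_mul_eq_one this with rfl | rfl <;> rfl
  have hw' : w ∈ Subgroup.zpowers (of s) :=
    ⟨j, show of s ^ j = w by rw [← hj, ← zpow_mul, hjj, zpow_one]⟩
  exact Subgroup.zpowers_le.mpr hw' (hw ▸ Subgroup.subset_closure (by simp))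

end FreeGroup

namespace IsFreeGroup

variable (G : Type*) [Group G] [IsFreeGroup G]

theorem isCyclic_of_center_ne_bot (hG : Subgroup.center G ≠ ⊥) : IsCyclic G := by
  classical
  obtain ⟨⟨z, hz⟩, hz1⟩ := Subgroup.ne_bot_iff_exists_ne_one.mp hG
  have : Subsingleton (Generators G) := ⟨fun s t => by
    by_contra hst
    have hcomm : ∀ r, Commute (toFreeGroup G z) (.of r) := fun r => by
      have hc : Commute z ((toFreeGroup G).symm (.of r)) :=
        (Subgroup.mem_center_iff.mp hz _).symm
      simpa using hc.map (toFreeGroup G)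
    obtain ⟨n, hn⟩ := Subgroup.mem_zpowers_iff.mp (FreeGroup.mem_zpowers_of_commute_of (hcomm s))
    obtain ⟨m, hm⟩ := Subgroup.mem_zpowers_iff.mp (FreeGroup.mem_zpowers_of_commute_of (hcomm t))
    have hm0 : m = 0 := by
      simpa [hst] using congrArg (fun x => Multiplicative.toAdd (FreeGroup.exponentSum t x))
        (hm.trans hn.symm)
    apply hz1
    simpa [hm0] using hm.symm⟩
  exact isCyclic_of_subsingleton_generators G

end IsFreeGroup

namespace FreeGroup

variable {α : Type*}

theorem exists_zpowers_eq_centralizer {a : FreeGroup α} (ha : a ≠ 1) :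
    ∃ ρ, Subgroup.zpowers ρ = Subgroup.centralizer {a} := by
  refine (Subgroup.isCyclic_iff_exists_zpowers_eq_top _).mp
    (IsFreeGroup.isCyclic_of_center_ne_bot _ ?_)
  refine Subgroup.ne_bot_iff_exists_ne_one.mpr
    ⟨⟨⟨a, Subgroup.mem_centralizer_singleton_iff.mpr rfl⟩, ?_⟩, ?_⟩
  · exact Subgroup.mem_center_iff.mpr fun g =>
      Subtype.ext (Subgroup.mem_centralizer_singleton_iff.mp g.2)
  · simpa [Subtype.ext_iff] using ha

theorem commute_trans {a x y : FreeGroup α} (ha : a ≠ 1) (hx : Commute x a) (hy : Commute a y) :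
    Commute x y := by
  obtain ⟨ρ, hρ⟩ := exists_zpowers_eq_centralizer ha
  obtain ⟨m, rfl⟩ : x ∈ Subgroup.zpowers ρ :=
    hρ ▸ Subgroup.mem_centralizer_singleton_iff.mpr hx.eq
  obtain ⟨n, rfl⟩ : y ∈ Subgroup.zpowers ρ :=
    hρ ▸ Subgroup.mem_centralizer_singleton_iff.mpr hy.eq.symm
  exact Commute.zpow_zpow_self ρ m n

theorem commute_of_commute_conj {a x : FreeGroup α} (ha : a ≠ 1) (h : Commute (x * a * x⁻¹) a) :
    Commute x a := by
  obtain ⟨ρ, hρ⟩ := exists_zpowers_eq_centralizer ha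
  have mem_iff (c : FreeGroup α) : c ∈ Subgroup.zpowers ρ ↔ Commute c a :=
    hρ ▸ Subgroup.mem_centralizer_singleton_iff
  -- conjugation by `x` maps the centralizer of `a` into the centralizer of `x a x⁻¹`, which
  -- is the centralizer of `a` again by commutative transitivity
  have conj_mem (y : FreeGroup α) (hy : Commute (y * a * y⁻¹) a) :
      y * ρ * y⁻¹ ∈ Subgroup.zpowers ρ := by
    have hyay : y * a * y⁻¹ ≠ 1 := by simpa using ha
    exact (mem_iff _).mpr
      (commute_trans hyay (((mem_iff ρ).mp (Subgroup.mem_zpowers ρ)).conj y) hy)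
  have h' : Commute (x⁻¹ * a * x⁻¹⁻¹) a := by simpa [mul_assoc] using (h.conj x⁻¹).symm
  obtain ⟨p, hp⟩ := Subgroup.mem_zpowers_iff.mp (conj_mem x h)
  obtain ⟨q, hq⟩ := Subgroup.mem_zpowers_iff.mp (conj_mem x⁻¹ h')
  have hρ1 : ρ ≠ 1 := by
    rintro rfl
    obtain ⟨k, hk⟩ := Subgroup.mem_zpowers_iff.mp ((mem_iff a).mpr (Commute.refl a))
    exact ha (by simpa using hk.symm)
  have hqp : q * p = 1 := by
    have : ρ ^ (q * p) = ρ ^ (1 : ℤ) := by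
      rw [zpow_mul, hq, conj_zpow, hp]
      group
    simpa [sub_eq_zero] using (IsMulTorsionFree.zpow_eq_one_iff_right (n := q * p - 1) hρ1).mp
      (by rw [zpow_sub, this, mul_inv_cancel])
  have hpp : p * p = 1 := by
    rcases Int.eq_one_or_neg_one_of_mul_eq_one (mul_comm q p ▸ hqp) with rfl | rfl <;> rfl
  have hxxρ : Commute (x * x) ρ := by
    refine mul_inv_eq_iff_eq_mul.mp ?_
    calc x * x * ρ * (x * x)⁻¹ = x * (x * ρ * x⁻¹) * x⁻¹ := by group
      _ = ρ := by rw [← hp, ← conj_zpow, ← hp, ← zpow_mul, hpp, zpow_one]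
  have hxρ : Commute x ρ := by
    by_cases hxx : x * x = 1
    · rw [sq_eq_one.mp (by rwa [sq] : x ^ 2 = 1)]
      exact Commute.one_left ρ
    · exact commute_trans hxx ((Commute.refl x).mul_right (Commute.refl x)) hxxρ
  obtain ⟨k, rfl⟩ := Subgroup.mem_zpowers_iff.mp ((mem_iff a).mpr (Commute.refl a))
  exact hxρ.zpow_right k

theorem commute_of_commute_conj_of_commute {A g k : FreeGroup α} (hA : A ≠ 1) (hg : g ≠ 1)
    (hgA : Commute g A) (hkgA : Commute (k * g * k⁻¹) A) : Commute k g :=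
  commute_of_commute_conj hg (commute_trans hA hkgA hgA.symm)

theorem commute_conj_mul_of_commute_conj_mul {A w : FreeGroup α} (hA : A ≠ 1)
    (y z : Bool → FreeGroup α)
    (h : ∀ i j, ¬(i = true ∧ j = true) → Commute (y i * z j * w * (y i * z j)⁻¹) A) :
    Commute (y true * z true * w * (y true * z true)⁻¹) A := by
  by_cases hw : w = 1
  · simp [hw]
  set g := y false * z false * w * (y false * z false)⁻¹ with hg
  have hg1 : g ≠ 1 := by rwa [hg, Ne, mul_inv_eq_one, mul_eq_left]
  have hgA : Commute g A := h false false (by simp)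
  have hk₁ : Commute (y false * z true * (y false * z false)⁻¹) g := by
    refine commute_of_commute_conj_of_commute hA hg1 hgA ?_
    convert h false true (by simp) using 1
    rw [hg]; group
  have hk₂ : Commute (y true * (y false)⁻¹) g := by
    refine commute_of_commute_conj_of_commute hA hg1 hgA ?_
    convert h true false (by simp) using 1
    rw [hg]; group
  have : y true * z true * w * (y true * z true)⁻¹ =
      (y true * (y false)⁻¹) * (y false * z true * (y false * z false)⁻¹) * g *
        ((y true * (y false)⁻¹) * (y false * z true * (y false * z false)⁻¹))⁻¹ := by
    rw [hg]; group
  rw [this, (hk₂.mul_left hk₁).mul_inv_cancel]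
  exact hgA

end FreeGroup

namespace FreeMonoid

variable {α : Type*}

theorem lift_of_apply (w : FreeMonoid α) :
    lift FreeGroup.of w = FreeGroup.mk (w.toList.map (·, true)) := by
  induction w using FreeMonoid.inductionOn' with
  | one => rfl
  | of_mul a w ih => simp only [map_mul, lift_eval_of, ih, toList_of_mul, List.map_cons]; rfl

theorem lift_of_injective : Function.Injective (lift (FreeGroup.of (α := α))) := by
  classical
  have isReduced (L : List α) : FreeGroup.IsReduced (L.map (·, true)) := by
    simpa [FreeGroup.IsReduced, List.isChain_map] using
      List.isChain_iff_getElem.mpr fun _ _ => trivial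
  intro u v h
  rw [lift_of_apply, lift_of_apply] at h
  have := congrArg FreeGroup.toWord h
  rw [FreeGroup.toWord_mk, FreeGroup.toWord_mk, (isReduced _).reduce_eq,
    (isReduced _).reduce_eq] at this
  exact toList.injective (List.map_injective_iff.mpr (fun _ _ h => (Prod.mk.inj h).1) this)

end FreeMonoid

theorem mul_mul_eq_iff_semiconjBy {G : Type*} [Group G] {p₀ p₁ q₀ q₁ p₀' p₁' q₀' q₁' m m' : G}
    (h₀ : p₀ * m * q₀ = p₀' * m' * q₀') :
    p₁ * m * q₁ = p₁' * m' * q₁' ↔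
      SemiconjBy m (q₀ * q₀'⁻¹ * q₁' * q₁⁻¹) (p₀⁻¹ * p₀' * p₁'⁻¹ * p₁) := by
  have hm' : m' = p₀'⁻¹ * (p₀ * m * q₀) * q₀'⁻¹ := by rw [h₀]; group
  rw [← mul_left_cancel_iff (a := p₀⁻¹ * p₀' * p₁'⁻¹), ← mul_right_cancel_iff (a := q₁⁻¹),
    SemiconjBy, eq_comm, hm']
  congr! 1 <;> group

def innerWord (c₂ c₁ c₀ : Bool) : FreeMonoid Sigma4 :=
  .of (c₂, false, 2) * .of (c₁, false, 1) * .of (c₀, false, 0) * .of (c₀, true, 0) *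
    .of (c₁, true, 1) * .of (c₂, true, 2)

theorem word4_eq (s : Fin 4 → Bool) :
    word4 s = .of (s 3, false, 3) * innerWord (s 2) (s 1) (s 0) * .of (s 3, true, 3) := rfl

theorem word4_injective : Function.Injective word4 := by
  intro s t h
  have := congrArg FreeMonoid.toList h
  simp only [word4, FreeMonoid.toList_ofList, List.cons.injEq, Prod.mk.injEq] at this
  funext i
  fin_cases i <;> tauto

theorem word4_mem_T4 {s : Fin 4 → Bool} (hs : s ≠ fun _ => true) : word4 s ∈ T4 :=
  ⟨⟨s, rfl⟩, fun h => hs (word4_injective h)⟩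

theorem semiconjBy_map_innerWord {α : Type*} {F : FreeMonoid Sigma4 →* FreeGroup α}
    {A Z : FreeGroup α} (hA : A ≠ 1)
    (h : ∀ c₂ c₁ c₀, ¬(c₂ = true ∧ c₁ = true ∧ c₀ = true) →
      SemiconjBy (F (innerWord c₂ c₁ c₀)) Z A) :
    SemiconjBy (F (innerWord true true true)) Z A := by
  let y (b : Bool) := F (.of (b, false, 2))
  let z (b : Bool) := F (.of (b, false, 1))
  let w := F (.of (true, false, 0)) * F (.of (true, true, 0)) *
    (F (.of (false, false, 0)) * F (.of (false, true, 0)))⁻¹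
  have hsplit (i j : Bool) :
      F (innerWord i j true) = y i * z j * w * (y i * z j)⁻¹ * F (innerWord i j false) := by
    simp only [y, z, w, innerWord, map_mul]
    group
  have hcomm (i j : Bool) (hij : ¬(i = true ∧ j = true)) :
      Commute (y i * z j * w * (y i * z j)⁻¹) A := by
    have := (h i j true (by tauto)).mul_left (h i j false (by simp)).inv_symm_left
    rwa [hsplit, mul_inv_cancel_right] at this
  rw [hsplit]
  exact SemiconjBy.mul_left (FreeGroup.commute_conj_mul_of_commute_conj_mul hA y z hcomm)
    (h true true false (by simp))

theorem T4_isTestSet_L4_freeGroup {α : Type*} (F G : FreeMonoid Sigma4 →* FreeGroup α)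
    (h : ∀ w ∈ T4, F w = G w) : ∀ w ∈ L4, F w = G w := by
  rintro _ ⟨s, rfl⟩
  by_cases hs : s ≠ fun _ => true
  · exact h _ (word4_mem_T4 hs)
  obtain rfl := not_not.mp hs
  have hM (c₃ c₂ c₁ c₀ : Bool) (hc : ¬(c₃ = true ∧ c₂ = true ∧ c₁ = true ∧ c₀ = true)) :
      F (.of (c₃, false, 3)) * F (innerWord c₂ c₁ c₀) * F (.of (c₃, true, 3)) =
        G (.of (c₃, false, 3)) * G (innerWord c₂ c₁ c₀) * G (.of (c₃, true, 3)) := by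
    have hs : ![c₀, c₁, c₂, c₃] ≠ fun _ => true := by
      simpa [funext_iff, Fin.forall_fin_succ, and_comm, and_assoc] using hc
    simpa [word4_eq] using h _ (word4_mem_T4 hs)
  set A := (F (.of (false, false, 3)))⁻¹ * G (.of (false, false, 3)) *
    (G (.of (true, false, 3)))⁻¹ * F (.of (true, false, 3))
  set Z := F (.of (false, true, 3)) * (G (.of (false, true, 3)))⁻¹ *
    G (.of (true, true, 3)) * (F (.of (true, true, 3)))⁻¹
  have hMZA (c₂ c₁ c₀ : Bool) (hc : ¬(c₂ = true ∧ c₁ = true ∧ c₀ = true)) :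
      SemiconjBy (F (innerWord c₂ c₁ c₀)) Z A :=
    (mul_mul_eq_iff_semiconjBy (hM false c₂ c₁ c₀ (by simp))).mp
      (hM true c₂ c₁ c₀ (by simpa using hc))
  have key : SemiconjBy (F (innerWord true true true)) Z A := by
    by_cases hA : A = 1
    · have hZ : Z = 1 := by simpa [hA, SemiconjBy] using hMZA false false false (by simp)
      rw [hA, hZ]
      exact SemiconjBy.one_right _
    · exact semiconjBy_map_innerWord hA hMZA
  rw [word4_eq, map_mul, map_mul, map_mul, map_mul]
  exact (mul_mul_eq_iff_semiconjBy (hM false true true true (by simp))).mpr key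

/-- `T₄` is a test set for `L₄`: any two morphisms agreeing on `T₄` agree on `L₄`. -/
theorem T4_isTestSet_L4 (Γ : Type) (f g : FreeMonoid Sigma4 →* FreeMonoid Γ)
    (h : ∀ w ∈ T4, f w = g w) : ∀ w ∈ L4, f w = g w := by
  let ι : FreeMonoid Γ →* FreeGroup Γ := FreeMonoid.lift FreeGroup.of
  intro w hw
  apply FreeMonoid.lift_of_injective
  exact T4_isTestSet_L4_freeGroup (ι.comp f) (ι.comp g) (fun w hw => congrArg ι (h w hw)) w hw
end

section
/- For every context-free grammar G = (N, Σ, R, S) there exists a linear context-free grammar G' over the same terminal alphabet Σ with at most |G| production rules, such that L(G') ⊆ L(G) and L(G') is a test set for L(G) (i.e., any two morphisms Σ* → Γ* that agree on every word of L(G') agree on every word of L(G)). -/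
/-- `T` is a test set for a language `L`: `T ⊆ L` and any two morphisms
(monoid homomorphisms between free monoids) that agree on every word of `T`
agree on every word of `L`. -/
def IsTestSet {α : Type*} (T L : Set (List α)) : Prop :=
  T ⊆ L ∧ ∀ (Γ : Type) (f g : FreeMonoid α →* FreeMonoid Γ),
    (∀ w ∈ T, f (FreeMonoid.ofList w) = g (FreeMonoid.ofList w)) →
    ∀ w ∈ L, f (FreeMonoid.ofList w) = g (FreeMonoid.ofList w)

/-- A context-free grammar is linear if every production right-hand side contains
at most one occurrence of a nonterminal. -/
def ContextFreeGrammar.IsLinear {T : Type*} (g : ContextFreeGrammar T) : Prop :=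
  ∀ r ∈ g.rules,
    (r.output.countP fun s => match s with
      | Symbol.nonterminal _ => true
      | Symbol.terminal _ => false) ≤ 1

/-- The size of a context-free grammar: `|G| = Σ_{A→rhs ∈ R} (1 + |rhs|)`. -/
def ContextFreeGrammar.size {T : Type*} (g : ContextFreeGrammar T) : ℕ :=
  ∑ r ∈ g.rules, (1 + r.output.length)

/-!
Fix for every productive nonterminal `A` some terminal word `c(A)` derivable from `A`, and put
`c(a) = a` for terminals. The linear grammar has, for every rule `A → X₁ ⋯ Xₖ` all of whose
nonterminals are productive, the rules `A → c(X₁ ⋯ Xₖ)` and `A → c(X₁ ⋯ Xᵢ₋₁) Xᵢ c(Xᵢ₊₁ ⋯ Xₖ)`,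
each of which is derivable in `g`. Let `E` be the set of words on which two morphisms coincide,
and suppose `E` contains the language of the linear grammar. By induction on the length of `A ⇒* w` in `g`, `u w v ∈ E`
whenever `S ⇒* u A v` in the linear grammar: write `w = w₁ ⋯ wₖ` with `Xᵢ ⇒* wᵢ` and replace the
`c(Xᵢ)` in `u c(X₁ ⋯ Xₖ) v ∈ E` by the `wᵢ` one at a time. Each replacement is an instance of the
exchange property `xz, yz, xt ∈ E → yt ∈ E` of free monoids, applied with `xt` the word obtained by
replacing `c(Xᵢ)` alone, which lies in `E` by the induction hypothesis for the context
`(u c(X₁ ⋯ Xᵢ₋₁), c(Xᵢ₊₁ ⋯ Xₖ) v)` of `Xᵢ`.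
-/

theorem List.append_eq_append_of_exchange {α : Type*} {x x' y y' z z' t t' : List α}
    (hxz : x ++ z = x' ++ z') (hyz : y ++ z = y' ++ z') (hxt : x ++ t = x' ++ t') :
    y ++ t = y' ++ t' := by
  rcases List.append_eq_append_iff.mp hxz with ⟨d, rfl, rfl⟩ | ⟨d, rfl, rfl⟩
  · have hy : y ++ d = y' := by simpa [← List.append_assoc] using hyz
    have ht : t = d ++ t' := by simpa using hxt
    rw [ht, ← hy, List.append_assoc]
  · have hy : y = y' ++ d := by simpa [← List.append_assoc] using hyz
    have ht : d ++ t = t' := by simpa using hxt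
    rw [← ht, hy, List.append_assoc]

namespace FreeMonoid

variable {α Γ ι : Type*} {f h : FreeMonoid α →* FreeMonoid Γ}

theorem ofList_append_mem_eqLocusM_of_exchange {x y z t : List α}
    (hxz : ofList (x ++ z) ∈ f.eqLocusM h) (hyz : ofList (y ++ z) ∈ f.eqLocusM h)
    (hxt : ofList (x ++ t) ∈ f.eqLocusM h) : ofList (y ++ t) ∈ f.eqLocusM h := by
  simp only [MonoidHom.mem_eqLocusM, ofList_append, map_mul, ← toList.injective.eq_iff,
    toList_mul] at *
  exact List.append_eq_append_of_exchange hxz hyz hxt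

theorem ofList_append_flatMap_append_mem_eqLocusM {c w : ι → List α} {l : List ι} {x y : List α}
    (hc : ofList (x ++ l.flatMap c ++ y) ∈ f.eqLocusM h)
    (hw : ∀ p i q, l = p ++ i :: q →
      ofList (x ++ p.flatMap c ++ w i ++ q.flatMap c ++ y) ∈ f.eqLocusM h) :
    ofList (x ++ l.flatMap w ++ y) ∈ f.eqLocusM h := by
  induction l generalizing x with
  | nil => simpa using hc
  | cons i l ih =>
    have hi : ofList (x ++ w i ++ l.flatMap c ++ y) ∈ f.eqLocusM h := by simpa using hw [] i l rfl
    suffices hsub : ∀ p j q, l = p ++ j :: q →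
        ofList (x ++ w i ++ p.flatMap c ++ w j ++ q.flatMap c ++ y) ∈ f.eqLocusM h by
      simpa using ih hi hsub
    intro p j q hl
    have := ofList_append_mem_eqLocusM_of_exchange (x := x ++ c i) (y := x ++ w i)
      (z := l.flatMap c ++ y) (t := p.flatMap c ++ w j ++ q.flatMap c ++ y)
      (by simpa using hc) (by simpa using hi) (by simpa [hl] using hw (i :: p) j q (by simp [hl]))
    simpa using this

end FreeMonoid

namespace ContextFreeRule

variable {T N : Type*} {r : ContextFreeRule T N}

theorem Rewrites.append_split {s₁ s₂ v : List (Symbol T N)} (h : r.Rewrites (s₁ ++ s₂) v) :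
    (∃ v₁, r.Rewrites s₁ v₁ ∧ v = v₁ ++ s₂) ∨ ∃ v₂, r.Rewrites s₂ v₂ ∧ v = s₁ ++ v₂ := by
  induction s₁ generalizing v with
  | nil => exact .inr ⟨v, h, rfl⟩
  | cons x s₁ ih =>
    cases h with
    | head => exact .inl ⟨_, .head s₁, by simp⟩
    | cons _ h =>
      rcases ih h with ⟨v₁, hv₁, rfl⟩ | ⟨v₂, hv₂, rfl⟩
      · exact .inl ⟨x :: v₁, hv₁.cons x, rfl⟩
      · exact .inr ⟨v₂, hv₂, rfl⟩

end ContextFreeRule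

namespace ContextFreeGrammar

variable {T : Type*} {g : ContextFreeGrammar T}

theorem Produces.append_split {s₁ s₂ v : List (Symbol T g.NT)} (h : g.Produces (s₁ ++ s₂) v) :
    (∃ v₁, g.Produces s₁ v₁ ∧ v = v₁ ++ s₂) ∨ ∃ v₂, g.Produces s₂ v₂ ∧ v = s₁ ++ v₂ := by
  obtain ⟨r, hr, hrw⟩ := h
  rcases hrw.append_split with ⟨v₁, hv₁, rfl⟩ | ⟨v₂, hv₂, rfl⟩
  exacts [.inl ⟨v₁, ⟨r, hr, hv₁⟩, rfl⟩, .inr ⟨v₂, ⟨r, hr, hv₂⟩, rfl⟩]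

theorem Produces.exists_rule_of_singleton {A : g.NT} {s : List (Symbol T g.NT)}
    (h : g.Produces [.nonterminal A] s) : ∃ r ∈ g.rules, r.input = A ∧ r.output = s := by
  obtain ⟨r, hr, hrw⟩ := h
  cases hrw with
  | head => exact ⟨r, hr, rfl, by simp⟩
  | cons _ h => cases h

theorem not_produces_map_terminal {w : List T} {v : List (Symbol T g.NT)} :
    ¬g.Produces (w.map .terminal) v := fun h ↦ by
  obtain ⟨r, -, hr⟩ := h.exists_nonterminal_input_mem
  simp at hr

theorem Generates.apply_rule {r : ContextFreeRule T g.NT} (hr : r ∈ g.rules)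
    {p q : List (Symbol T g.NT)} (h : g.Generates (p ++ [.nonterminal r.input] ++ q)) :
    g.Generates (p ++ r.output ++ q) :=
  Derives.trans_produces h ⟨r, hr, r.rewrites_of_exists_parts p q⟩

inductive DerivesIn (g : ContextFreeGrammar T) :
    List (Symbol T g.NT) → List (Symbol T g.NT) → ℕ → Prop
  | refl (s : List (Symbol T g.NT)) : g.DerivesIn s s 0
  | head {u v w : List (Symbol T g.NT)} {n : ℕ} :
      g.Produces u v → g.DerivesIn v w n → g.DerivesIn u w (n + 1)

theorem DerivesIn.derives {u v : List (Symbol T g.NT)} {n : ℕ} (h : g.DerivesIn u v n) :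
    g.Derives u v := by
  induction h with
  | refl s => exact Derives.refl s
  | head hp _ ih => exact hp.trans_derives ih

theorem Derives.exists_derivesIn {u v : List (Symbol T g.NT)} (h : g.Derives u v) :
    ∃ n, g.DerivesIn u v n := by
  induction h using Relation.ReflTransGen.head_induction_on with
  | refl => exact ⟨0, .refl _⟩
  | head hp _ ih =>
    obtain ⟨n, hn⟩ := ih
    exact ⟨n + 1, .head hp hn⟩

theorem DerivesIn.eq_of_map_terminal {w : List T} {v : List (Symbol T g.NT)} {n : ℕ}
    (h : g.DerivesIn (w.map .terminal) v n) : v = w.map .terminal := by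
  cases h with
  | refl => rfl
  | head hp => exact absurd hp not_produces_map_terminal

theorem DerivesIn.append_split {s₁ s₂ v : List (Symbol T g.NT)} {n : ℕ}
    (h : g.DerivesIn (s₁ ++ s₂) v n) :
    ∃ v₁ v₂ n₁ n₂, v = v₁ ++ v₂ ∧ n₁ + n₂ = n ∧ g.DerivesIn s₁ v₁ n₁ ∧ g.DerivesIn s₂ v₂ n₂ := by
  generalize hs : s₁ ++ s₂ = s at h
  induction h generalizing s₁ s₂ with
  | refl => exact ⟨s₁, s₂, 0, 0, hs.symm, rfl, .refl s₁, .refl s₂⟩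
  | head hp _ ih =>
    subst hs
    rcases hp.append_split with ⟨v₁, hv₁, rfl⟩ | ⟨v₂, hv₂, rfl⟩
    · obtain ⟨w₁, w₂, n₁, n₂, rfl, rfl, h₁, h₂⟩ := ih rfl
      exact ⟨w₁, w₂, n₁ + 1, n₂, rfl, by omega, .head hv₁ h₁, h₂⟩
    · obtain ⟨w₁, w₂, n₁, n₂, rfl, rfl, h₁, h₂⟩ := ih rfl
      exact ⟨w₁, w₂, n₁, n₂ + 1, rfl, by omega, h₁, .head hv₂ h₂⟩

theorem DerivesIn.exists_rule {A : g.NT} {w : List T} {n : ℕ}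
    (h : g.DerivesIn [.nonterminal A] (w.map .terminal) n) :
    ∃ r ∈ g.rules, r.input = A ∧ ∃ m < n, g.DerivesIn r.output (w.map .terminal) m := by
  generalize hs : [Symbol.nonterminal A] = s at h
  cases h with
  | refl => cases w <;> simp at hs
  | head hp hd =>
    subst hs
    obtain ⟨r, hr, rfl, rfl⟩ := hp.exists_rule_of_singleton
    exact ⟨r, hr, rfl, _, Nat.lt_succ_self _, hd⟩

theorem DerivesIn.exists_symbolwise {s : List (Symbol T g.NT)} {w : List T} {n : ℕ}
    (h : g.DerivesIn s (w.map .terminal) n) :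
    ∃ l : List (Symbol T g.NT × List T), l.map Prod.fst = s ∧ l.flatMap Prod.snd = w ∧
      ∀ x ∈ l, ∃ m ≤ n, g.DerivesIn [x.1] (x.2.map .terminal) m := by
  induction s generalizing w n with
  | nil =>
    obtain rfl : w = [] := by simpa using (DerivesIn.eq_of_map_terminal (w := []) h).symm
    exact ⟨[], rfl, rfl, by simp⟩
  | cons X s ih =>
    obtain ⟨v₁, v₂, n₁, n₂, hv, rfl, h₁, h₂⟩ := DerivesIn.append_split (s₁ := [X]) h
    obtain ⟨w₁, w₂, rfl, rfl, rfl⟩ := List.map_eq_append_iff.mp hv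
    obtain ⟨l, rfl, rfl, hl⟩ := ih h₂
    refine ⟨(X, w₁) :: l, rfl, rfl, ?_⟩
    rintro x (_ | ⟨_, hx⟩)
    · exact ⟨n₁, by omega, h₁⟩
    · obtain ⟨m, hm, hx⟩ := hl x hx
      exact ⟨m, by omega, hx⟩

def IsProductive (g : ContextFreeGrammar T) (A : g.NT) : Prop :=
  ∃ w : List T, g.Derives [.nonterminal A] (w.map .terminal)

open Classical in
noncomputable def witness (g : ContextFreeGrammar T) : Symbol T g.NT → List T
  | .terminal a => [a]
  | .nonterminal A => if h : g.IsProductive A then h.choose else []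

theorem derives_witness {X : Symbol T g.NT} (hX : ∀ A, X = .nonterminal A → g.IsProductive A) :
    g.Derives [X] ((g.witness X).map .terminal) := by
  cases X with
  | terminal a => exact Derives.refl _
  | nonterminal A =>
    have hA := hX A rfl
    simpa [witness, hA] using hA.choose_spec

theorem derives_flatMap_witness {s : List (Symbol T g.NT)}
    (hs : ∀ A, .nonterminal A ∈ s → g.IsProductive A) :
    g.Derives s ((s.flatMap g.witness).map .terminal) := by
  induction s with
  | nil => exact Derives.refl _
  | cons X s ih =>
    have hX := derives_witness (X := X) fun A hA ↦ hs A (by simp [hA])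
    have := (hX.append_right s).trans ((ih fun A hA ↦ hs A (by simp [hA])).append_left _)
    simpa using this

/-- Keeps the `i`-th symbol of `r.output` and replaces all others by their witnesses; for
`i = r.output.length` nothing is kept, which gives the rule `A → c(r.output)`. -/
noncomputable def linearizeAt (g : ContextFreeGrammar T) (r : ContextFreeRule T g.NT) (i : ℕ) :
    ContextFreeRule T g.NT :=
  ⟨r.input, ((r.output.take i).flatMap g.witness).map .terminal ++ (r.output.drop i).take 1 ++
    ((r.output.drop (i + 1)).flatMap g.witness).map .terminal⟩

open Classical in
noncomputable def productiveRules (g : ContextFreeGrammar T) : Finset (ContextFreeRule T g.NT) :=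
  g.rules.filter fun r ↦ ∀ A, .nonterminal A ∈ r.output → g.IsProductive A

theorem mem_productiveRules {r : ContextFreeRule T g.NT} :
    r ∈ g.productiveRules ↔ r ∈ g.rules ∧ ∀ A, .nonterminal A ∈ r.output → g.IsProductive A :=
  by classical exact Finset.mem_filter

theorem productiveRules_subset : g.productiveRules ⊆ g.rules :=
  fun _ hr ↦ (mem_productiveRules.mp hr).1

open Classical in
noncomputable abbrev linearization (g : ContextFreeGrammar T) : ContextFreeGrammar T where
  NT := g.NT
  initial := g.initial
  rules := g.productiveRules.biUnion
    fun r ↦ (Finset.range (r.output.length + 1)).image (g.linearizeAt r)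

theorem mem_linearization_rules {r' : ContextFreeRule T g.NT} :
    r' ∈ g.linearization.rules ↔
      ∃ r ∈ g.productiveRules, ∃ i ≤ r.output.length, g.linearizeAt r i = r' := by
  simp

theorem isLinear_linearization : g.linearization.IsLinear := by
  intro r' hr'
  obtain ⟨r, -, i, -, rfl⟩ := mem_linearization_rules.mp hr'
  simp only [linearizeAt, List.countP_append, List.countP_map, Function.comp_def,
    List.countP_false, Function.const_apply, zero_add, add_zero]
  exact List.countP_le_length.trans (List.length_take_le 1 _)

theorem card_linearization_rules_le : g.linearization.rules.card ≤ g.size := by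
  classical
  calc g.linearization.rules.card
      ≤ ∑ r ∈ g.productiveRules,
          ((Finset.range (r.output.length + 1)).image (g.linearizeAt r)).card :=
        Finset.card_biUnion_le
    _ ≤ ∑ r ∈ g.productiveRules, (1 + r.output.length) :=
        Finset.sum_le_sum fun r _ ↦ by
          simpa [add_comm] using Finset.card_image_le (s := Finset.range (r.output.length + 1))
    _ ≤ ∑ r ∈ g.rules, (1 + r.output.length) :=
        Finset.sum_le_sum_of_subset productiveRules_subset

theorem derives_of_mem_linearization {r' : ContextFreeRule T g.NT}
    (hr' : r' ∈ g.linearization.rules) : g.Derives [.nonterminal r'.input] r'.output := by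
  obtain ⟨r, hr, i, -, rfl⟩ := mem_linearization_rules.mp hr'
  obtain ⟨hr, hprod⟩ := mem_productiveRules.mp hr
  have hsplit :
      r.output = r.output.take i ++ (r.output.drop i).take 1 ++ r.output.drop (i + 1) := by
    rw [List.append_assoc, ← List.drop_drop, List.take_append_drop, List.take_append_drop]
  have hleft := derives_flatMap_witness (s := r.output.take i) fun A hA ↦
    hprod A (List.mem_of_mem_take hA)
  have hright := derives_flatMap_witness (s := r.output.drop (i + 1)) fun A hA ↦
    hprod A (List.mem_of_mem_drop hA)
  refine (Produces.single ⟨r, hr, .input_output⟩).trans ?_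
  rw [hsplit]
  exact ((hleft.append_right _).append_right _).trans (hright.append_left _)

theorem Derives.of_linearization {u v : List (Symbol T g.NT)} (h : g.linearization.Derives u v) :
    g.Derives u v := by
  induction h with
  | refl => exact Derives.refl _
  | tail _ hp ih =>
    obtain ⟨r', hr', hrw⟩ := hp
    obtain ⟨p, q, rfl, rfl⟩ := hrw.exists_parts
    exact ih.trans (((derives_of_mem_linearization hr').append_left p).append_right q)

theorem mem_language_of_mem_linearization {w : List T} (hw : w ∈ g.linearization.language) :
    w ∈ g.language :=
  Derives.of_linearization hw

theorem mem_linearization_rules_of_mem {r : ContextFreeRule T g.NT} (hr : r ∈ g.productiveRules) :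
    ⟨r.input, (r.output.flatMap g.witness).map .terminal⟩ ∈ g.linearization.rules :=
  mem_linearization_rules.mpr ⟨r, hr, r.output.length, le_rfl,
    by simp [linearizeAt, List.drop_eq_nil_of_le]⟩

theorem mem_linearization_rules_of_eq_append_cons {r : ContextFreeRule T g.NT}
    (hr : r ∈ g.productiveRules) {p q : List (Symbol T g.NT)} {X : Symbol T g.NT}
    (hpq : r.output = p ++ X :: q) :
    ⟨r.input, (p.flatMap g.witness).map .terminal ++ [X] ++ (q.flatMap g.witness).map .terminal⟩ ∈
      g.linearization.rules :=
  mem_linearization_rules.mpr ⟨r, hr, p.length, by simp [hpq], by simp [linearizeAt, hpq]⟩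

theorem ofList_mem_eqLocusM_of_derivesIn {Γ : Type*} {f h : FreeMonoid T →* FreeMonoid Γ}
    (hL : ∀ w ∈ g.linearization.language, FreeMonoid.ofList w ∈ f.eqLocusM h)
    {n : ℕ} {A : g.NT} {u w v : List T}
    (hA : g.DerivesIn [.nonterminal A] (w.map .terminal) n)
    (hctx : g.linearization.Generates (u.map .terminal ++ [.nonterminal A] ++ v.map .terminal)) :
    FreeMonoid.ofList (u ++ w ++ v) ∈ f.eqLocusM h := by
  induction n using Nat.strong_induction_on generalizing A u w v with | _ n ih =>
  obtain ⟨r, hr, rfl, m, hmn, hd⟩ := hA.exists_rule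
  obtain ⟨l, hl, rfl, hlw⟩ := hd.exists_symbolwise
  have hprod : r ∈ g.productiveRules := mem_productiveRules.mpr ⟨hr, fun B hB ↦ by
    obtain ⟨⟨X, wX⟩, hx, rfl⟩ := List.mem_map.mp (hl ▸ hB)
    obtain ⟨k, -, hk⟩ := hlw _ hx
    exact ⟨wX, hk.derives⟩⟩
  have hbase : FreeMonoid.ofList (u ++ r.output.flatMap g.witness ++ v) ∈ f.eqLocusM h :=
    hL _ <| by
      simpa [Generates] using Generates.apply_rule (mem_linearization_rules_of_mem hprod) hctx
  rw [← hl, List.flatMap_map] at hbase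
  refine FreeMonoid.ofList_append_flatMap_append_mem_eqLocusM hbase fun p x q hpq ↦ ?_
  obtain ⟨k, hkm, hk⟩ := hlw x (by simp [hpq])
  obtain ⟨X, wX⟩ := x
  cases X with
  | terminal a =>
    obtain rfl : wX = [a] := by simpa using DerivesIn.eq_of_map_terminal (w := [a]) hk
    simpa [hpq, witness] using hbase
  | nonterminal B =>
    have hout : r.output = p.map Prod.fst ++ .nonterminal B :: q.map Prod.fst := by simp [← hl, hpq]
    have hctxB := Generates.apply_rule (mem_linearization_rules_of_eq_append_cons hprod hout) hctx
    simpa using ih k (by omega) hk (u := u ++ p.flatMap fun x ↦ g.witness x.1)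
      (v := (q.flatMap fun x ↦ g.witness x.1) ++ v) (by simpa [List.flatMap_map] using hctxB)

end ContextFreeGrammar

/-- For every context-free grammar `g` there is a linear context-free grammar `g'`
over the same terminal alphabet with at most `|g|` rules, whose language is contained
in `L(g)` and is a test set for `L(g)`. -/
theorem exists_linear_grammar_testSet {T : Type} (g : ContextFreeGrammar T) :
    ∃ g' : ContextFreeGrammar T, g'.IsLinear ∧ g'.rules.card ≤ g.size ∧
      { w | w ∈ g'.language } ⊆ { w | w ∈ g.language } ∧
      IsTestSet { w | w ∈ g'.language } { w | w ∈ g.language } := by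
  have hsub : { w | w ∈ g.linearization.language } ⊆ { w | w ∈ g.language } :=
    fun _ ↦ ContextFreeGrammar.mem_language_of_mem_linearization
  refine ⟨g.linearization, ContextFreeGrammar.isLinear_linearization,
    ContextFreeGrammar.card_linearization_rules_le, hsub, hsub, fun Γ f h hfh w hw ↦ ?_⟩
  obtain ⟨n, hn⟩ := ContextFreeGrammar.Derives.exists_derivesIn hw
  simpa using ContextFreeGrammar.ofList_mem_eqLocusM_of_derivesIn (u := []) (v := []) hfh hn
    (ContextFreeGrammar.Derives.refl _)
end

section
/- Let x, y, u, v, u', v' be words over an alphabet Γ such that x is not a prefix of y and y is not a prefix of x. If u·x·v = u'·x·v' and u·y·v = u'·y·v', then u = u' and v = v'. -/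
/-- If `x <+: t ++ x` with `t` nonempty, then `x` is a prefix of some power of `t`. -/
theorem prefix_flatten_replicate {Γ : Type*} (t : List Γ) (ht : t ≠ []) (x : List Γ)
    (h : x <+: t ++ x) : ∃ n, x <+: (List.replicate n t).flatten := by
  by_cases hle : x.length ≤ t.length
  · refine ⟨1, ?_⟩
    have hx : x <+: t := List.prefix_of_prefix_length_le h (List.prefix_append t x) hle
    simpa using hx
  · push_neg at hle
    have htx : t <+: x :=
      List.prefix_of_prefix_length_le (List.prefix_append t x) h (le_of_lt hle)
    obtain ⟨x₁, hx1⟩ := htx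
    subst hx1
    have h' : x₁ <+: t ++ x₁ :=
      (List.prefix_append_right_inj t).mp (by simpa [List.append_assoc] using h)
    obtain ⟨n, hn⟩ := prefix_flatten_replicate t ht x₁ h'
    refine ⟨n + 1, ?_⟩
    simp only [List.replicate_succ, List.flatten_cons]
    exact (List.prefix_append_right_inj t).mpr hn
termination_by x.length
decreasing_by
  have h0 : 0 < t.length := List.length_pos_iff.mpr ht
  have := congrArg List.length hx1
  simp [List.length_append] at this
  omega
  

/-- Two words that are each "shift-invariant" under a nonempty word `t`
are prefix-comparable. -/
theorem no_double_shift {Γ : Type*} (x y t : List Γ) (ht : t ≠ [])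
    (hx : x <+: t ++ x) (hy : y <+: t ++ y)
    (hxy : ¬ x <+: y) (hyx : ¬ y <+: x) : False := by
  obtain ⟨n, hn⟩ := prefix_flatten_replicate t ht x hx
  obtain ⟨m, hm⟩ := prefix_flatten_replicate t ht y hy
  have hn' : x <+: (List.replicate (n + m) t).flatten := by
    refine hn.trans ?_
    rw [List.replicate_add, List.flatten_append]
    exact List.prefix_append _ _
  have hm' : y <+: (List.replicate (n + m) t).flatten := by
    refine hm.trans ?_
    rw [add_comm, List.replicate_add, List.flatten_append]
    exact List.prefix_append _ _
  rcases le_total x.length y.length with h | h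
  · exact hxy (List.prefix_of_prefix_length_le hn' hm' h)
  · exact hyx (List.prefix_of_prefix_length_le hm' hn' h)

/-- If `x` and `y` are prefix-incomparable, `u·x·v = u'·x·v'` and `u·y·v = u'·y·v'`
imply `u = u'` and `v = v'`. -/
theorem eq_of_eq_around_prefix_incomparable {Γ : Type*} (x y u v u' v' : List Γ)
    (hxy : ¬ x <+: y) (hyx : ¬ y <+: x)
    (h₁ : u ++ x ++ v = u' ++ x ++ v') (h₂ : u ++ y ++ v = u' ++ y ++ v') :
    u = u' ∧ v = v' := by
  have hu : u = u' := by
    rcases le_total u.length u'.length with hle | hle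
    · have hpre : u <+: u' :=
        List.prefix_of_prefix_length_le ⟨x ++ v, by simpa [List.append_assoc] using h₁⟩
          ⟨x ++ v', by simp [List.append_assoc]⟩ hle
      obtain ⟨t, rfl⟩ := hpre
      by_cases ht : t = []
      · simp [ht]
      · exfalso
        simp only [List.append_assoc] at h₁ h₂
        have hx : x ++ v = t ++ (x ++ v') := List.append_cancel_left h₁
        have hy : y ++ v = t ++ (y ++ v') := List.append_cancel_left h₂
        have hxp : x <+: t ++ x :=
          List.prefix_of_prefix_length_le (List.prefix_append x v) ⟨v', by simp [List.append_assoc, hx.symm]⟩ (by simp)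
        have hyp : y <+: t ++ y :=
          List.prefix_of_prefix_length_le (List.prefix_append y v) ⟨v', by simp [List.append_assoc, hy.symm]⟩ (by simp)
        exact no_double_shift x y t ht hxp hyp hxy hyx
    · have hpre : u' <+: u :=
        List.prefix_of_prefix_length_le ⟨x ++ v', by simpa [List.append_assoc] using h₁.symm⟩
          ⟨x ++ v, by simp [List.append_assoc]⟩ hle
      obtain ⟨t, rfl⟩ := hpre
      by_cases ht : t = []
      · simp [ht]
      · exfalso
        simp only [List.append_assoc] at h₁ h₂
        have hx : x ++ v' = t ++ (x ++ v) := (List.append_cancel_left h₁.symm)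
        have hy : y ++ v' = t ++ (y ++ v) := (List.append_cancel_left h₂.symm)
        have hxp : x <+: t ++ x :=
          List.prefix_of_prefix_length_le (List.prefix_append x v') ⟨v, by simp [List.append_assoc, hx.symm]⟩ (by simp)
        have hyp : y <+: t ++ y :=
          List.prefix_of_prefix_length_le (List.prefix_append y v') ⟨v, by simp [List.append_assoc, hy.symm]⟩ (by simp)
        exact no_double_shift x y t ht hxp hyp hxy hyx
  subst hu
  refine ⟨rfl, ?_⟩
  simp only [List.append_assoc] at h₁
  exact List.append_cancel_left (List.append_cancel_left h₁)
end

section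
/- Let u, v, u', v', x₁, x₂, x₃ be words over an alphabet Γ such that x₂·x₃ = x₃·x₂ and x₂ ≠ ε. If u·x₁·v = u'·x₁·v' and u·x₁·x₂·v = u'·x₁·x₂·v', then u·x₁·x₂·x₃·v = u'·x₁·x₂·x₃·v'. -/
/-!
Comparing the first equation, one of `u x₁`, `u' x₁` extends the other by a word `t` that is moved
across the insertion point; the second equation then says that `t` commutes with `x₂`. Two words
commuting with the same nonempty word `x` commute with each other: both commute with a power of `x`
longer than themselves, so both products are prefixes of that power of the same length. Hence `t`
commutes with `x₃`, thus with `x₂ x₃`, and can be moved across `x₂ x₃` as well.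
-/

namespace List

variable {α : Type*}

theorem append_comm_flatten_replicate {a x : List α} (h : a ++ x = x ++ a) (n : ℕ) :
    a ++ (replicate n x).flatten = (replicate n x).flatten ++ a := by
  induction n with
  | zero => simp
  | succ n ih =>
    rw [replicate_succ, flatten_cons, ← append_assoc, h, append_assoc, ih, append_assoc]

theorem prefix_of_append_comm {a p : List α} (h : a ++ p = p ++ a) (hlen : a.length ≤ p.length) :
    a <+: p :=
  prefix_of_prefix_length_le (h ▸ prefix_append a p) (prefix_append p a) hlen

theorem append_comm_of_append_comm_of_ne_nil {a b x : List α} (ha : a ++ x = x ++ a)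
    (hb : b ++ x = x ++ b) (hx : x ≠ []) : a ++ b = b ++ a := by
  set p := (replicate (a.length + b.length) x).flatten
  have hp : a.length + b.length ≤ p.length := by
    have := length_pos_iff.mpr hx
    simp only [p, length_flatten, map_replicate, sum_replicate, smul_eq_mul]
    nlinarith
  have hap := append_comm_flatten_replicate ha (a.length + b.length)
  have hbp := append_comm_flatten_replicate hb (a.length + b.length)
  have hab : a ++ b ++ p = p ++ (a ++ b) := by
    rw [append_assoc, hbp, ← append_assoc, hap, append_assoc]
  have hba : b ++ a ++ p = p ++ (b ++ a) := by
    rw [append_assoc, hap, ← append_assoc, hbp, append_assoc]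
  have hlen : (a ++ b).length = (b ++ a).length := by simp [Nat.add_comm]
  refine (prefix_of_prefix_length_le (prefix_of_append_comm hab ?_)
    (prefix_of_append_comm hba ?_) hlen.le).eq_of_length hlen
  all_goals simp only [length_append]; omega

theorem append_comm_of_append_append_eq {a t x v : List α}
    (h : a ++ x ++ (t ++ v) = a ++ t ++ x ++ v) : x ++ t = t ++ x := by
  have h' : a ++ (x ++ t) ++ v = a ++ (t ++ x) ++ v := by simpa only [append_assoc] using h
  exact append_cancel_left (append_cancel_right h')

theorem append_append_eq_of_append_append_eq {a b v v' x y : List α} (hxy : x ++ y = y ++ x)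
    (hx : x ≠ []) (h₁ : a ++ v = b ++ v') (h₂ : a ++ x ++ v = b ++ x ++ v') :
    a ++ y ++ v = b ++ y ++ v' := by
  rcases append_eq_append_iff.mp h₁ with ⟨t, rfl, rfl⟩ | ⟨t, rfl, rfl⟩
  · have hyt := append_comm_of_append_comm_of_ne_nil hxy.symm
      (append_comm_of_append_append_eq h₂).symm hx
    simp only [append_assoc]
    rw [← append_assoc y, hyt, append_assoc]
  · have hyt := append_comm_of_append_comm_of_ne_nil hxy.symm
      (append_comm_of_append_append_eq h₂.symm).symm hx
    simp only [append_assoc]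
    rw [← append_assoc y, hyt, append_assoc]

end List

/-- If `x₂·x₃ = x₃·x₂`, `x₂ ≠ ε`, `u·x₁·v = u'·x₁·v'` and `u·x₁·x₂·v = u'·x₁·x₂·v'`,
then `u·x₁·x₂·x₃·v = u'·x₁·x₂·x₃·v'`. -/
theorem third_eq_of_first_two {Γ : Type*} (u v u' v' x₁ x₂ x₃ : List Γ)
    (hcomm : x₂ ++ x₃ = x₃ ++ x₂) (hx₂ : x₂ ≠ [])
    (h₁ : u ++ x₁ ++ v = u' ++ x₁ ++ v')
    (h₂ : u ++ x₁ ++ x₂ ++ v = u' ++ x₁ ++ x₂ ++ v') :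
    u ++ x₁ ++ x₂ ++ x₃ ++ v = u' ++ x₁ ++ x₂ ++ x₃ ++ v' := by
  have hx₂_comm : x₂ ++ (x₂ ++ x₃) = x₂ ++ x₃ ++ x₂ := by rw [List.append_assoc, hcomm]
  simpa only [List.append_assoc] using
    List.append_append_eq_of_append_append_eq hx₂_comm hx₂ h₁ h₂
end

section
/- Let u, v, u', v', x₁, x₂, x₃ be words over an alphabet Γ such that x₂·x₃ = x₃·x₂ and x₂·x₃ ≠ ε. If u·x₁·v = u'·x₁·v' and u·x₁·x₂·x₃·v = u'·x₁·x₂·x₃·v', then u·x₁·x₂·v = u'·x₁·x₂·v'. -/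
/-!
Cancelling the common prefix, we may assume `u' = u ++ w`. Then `x₁` is a prefix of `w ++ x₁`,
say `w ++ x₁ = x₁ ++ t`, and `v = t ++ v'`. In these terms the hypothesis on `x₁ x₂ x₃` says that
`t` commutes with `x₂ ++ x₃`, and the conclusion says that `t` commutes with `x₂`. Since `x₂` also
commutes with the nonempty word `x₂ ++ x₃`, this follows from the transitivity of commutation
through a nonempty word: if `t` and `s` both commute with `y ≠ []`, then `t ++ s` and `s ++ t`
commute with a power of `y` longer than either, so both are the prefix of that power of length
`|t| + |s|`.
-/

namespace List

variable {α : Type*}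

theorem append_flatten_replicate_comm {t y : List α} (h : t ++ y = y ++ t) :
    ∀ n, t ++ (replicate n y).flatten = (replicate n y).flatten ++ t
  | 0 => by simp
  | n + 1 => by
    rw [replicate_succ, flatten_cons, ← append_assoc, h, append_assoc,
      append_flatten_replicate_comm h n, append_assoc]

theorem prefix_of_append_comm_s8 {t z : List α} (h : t ++ z = z ++ t)
    (hlen : t.length ≤ z.length) : t <+: z :=
  (isPrefix_append_of_length hlen).1 ⟨z, h⟩

theorem append_comm_of_append_comm_of_ne_nil_s8 {t s y : List α} (hy : y ≠ [])
    (ht : t ++ y = y ++ t) (hs : s ++ y = y ++ s) : t ++ s = s ++ t := by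
  set Y := (replicate (t ++ s).length y).flatten
  have hY : (t ++ s).length ≤ Y.length := by
    simpa [Y] using Nat.le_mul_of_pos_right _ (length_pos_iff.2 hy)
  have hcomm {a b : List α} (ha : a ++ y = y ++ a) (hb : b ++ y = y ++ b) :
      a ++ b ++ Y = Y ++ (a ++ b) := by
    rw [append_assoc, append_flatten_replicate_comm hb, ← append_assoc,
      append_flatten_replicate_comm ha, append_assoc]
  have hts := prefix_of_append_comm_s8 (hcomm ht hs) hY
  have hst := prefix_of_append_comm_s8 (hcomm hs ht) (by simpa [add_comm] using hY)
  exact (prefix_of_prefix_length_le hts hst (by simp [add_comm])).eq_of_length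
    (by simp [add_comm])

theorem append_append_eq_append_append_iff_comm {x w t z v : List α}
    (h : x ++ t = w ++ x) : x ++ (z ++ (t ++ v)) = w ++ (x ++ (z ++ v)) ↔ z ++ t = t ++ z := by
  rw [← append_assoc w, ← h, append_assoc, append_cancel_left_eq, ← append_assoc,
    ← append_assoc, append_cancel_right_eq]

end List

open List

theorem middle_eq_of_outer_two_of_eq_append {Γ : Type*} {v v' w x₁ x₂ x₃ : List Γ}
    (hcomm : x₂ ++ x₃ = x₃ ++ x₂) (hx : x₂ ++ x₃ ≠ [])
    (h₁ : x₁ ++ v = w ++ (x₁ ++ v'))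
    (h₃ : x₁ ++ (x₂ ++ (x₃ ++ v)) = w ++ (x₁ ++ (x₂ ++ (x₃ ++ v')))) :
    x₁ ++ (x₂ ++ v) = w ++ (x₁ ++ (x₂ ++ v')) := by
  obtain ⟨t, ht⟩ : x₁ <+: w ++ x₁ :=
    prefix_of_prefix_length_le ⟨v, rfl⟩ ⟨v', by rw [h₁, append_assoc]⟩ (by simp)
  obtain rfl : v = t ++ v' :=
    append_cancel_left (h₁.trans (by rw [← append_assoc, ← ht, append_assoc]))
  have htx : t ++ (x₂ ++ x₃) = x₂ ++ x₃ ++ t :=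
    ((append_append_eq_append_append_iff_comm ht).1 (by simpa only [append_assoc] using h₃)).symm
  have hx₂ : x₂ ++ (x₂ ++ x₃) = x₂ ++ x₃ ++ x₂ := by rw [append_assoc, ← hcomm]
  rw [append_append_eq_append_append_iff_comm ht]
  exact (append_comm_of_append_comm_of_ne_nil_s8 hx htx hx₂).symm

/-- If `x₂·x₃ = x₃·x₂`, `x₂·x₃ ≠ ε`, `u·x₁·v = u'·x₁·v'` and
`u·x₁·x₂·x₃·v = u'·x₁·x₂·x₃·v'`, then `u·x₁·x₂·v = u'·x₁·x₂·v'`. -/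
theorem middle_eq_of_outer_two {Γ : Type*} (u v u' v' x₁ x₂ x₃ : List Γ)
    (hcomm : x₂ ++ x₃ = x₃ ++ x₂) (hx : x₂ ++ x₃ ≠ [])
    (h₁ : u ++ x₁ ++ v = u' ++ x₁ ++ v')
    (h₃ : u ++ x₁ ++ x₂ ++ x₃ ++ v = u' ++ x₁ ++ x₂ ++ x₃ ++ v') :
    u ++ x₁ ++ x₂ ++ v = u' ++ x₁ ++ x₂ ++ v' := by
  simp only [append_assoc] at h₁ h₃ ⊢
  rcases append_eq_append_iff.1 h₁ with ⟨w, rfl, h⟩ | ⟨w, rfl, h⟩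
  · simp only [append_assoc, append_cancel_left_eq] at h₃ ⊢
    exact middle_eq_of_outer_two_of_eq_append hcomm hx h h₃
  · simp only [append_assoc, append_cancel_left_eq] at h₃ ⊢
    exact (middle_eq_of_outer_two_of_eq_append hcomm hx h h₃.symm).symm
end

section
/- Let u, v, u', v', x₁, x₂, x₃ be words over an alphabet Γ such that x₂·x₃ = x₃·x₂ and x₃ ≠ ε. If u·x₁·x₂·v = u'·x₁·x₂·v' and u·x₁·x₂·x₃·v = u'·x₁·x₂·x₃·v', then u·x₁·v = u'·x₁·v'. -/
private def repN {Γ : Type*} (n : ℕ) (c : List Γ) : List Γ := (List.replicate n c).flatten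

private lemma repN_length {Γ : Type*} (n : ℕ) (c : List Γ) :
    (repN n c).length = n * c.length := by
  simp [repN, List.length_flatten, List.map_replicate]

private lemma comm_repN {Γ : Type*} {a c : List Γ} (h : a ++ c = c ++ a) (n : ℕ) :
    a ++ repN n c = repN n c ++ a := by
  induction n with
  | zero => simp [repN]
  | succ k ih =>
    show a ++ (c ++ repN k c) = (c ++ repN k c) ++ a
    rw [← List.append_assoc, h, List.append_assoc, ih, ← List.append_assoc]

/-- a word commuting with a nonempty word `c` is a prefix of a big power of `c` -/
private lemma prefix_repN {Γ : Type*} {a c : List Γ} (h : a ++ c = c ++ a) (hc : c ≠ []) :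
    a <+: repN a.length c := by
  have hlen : a.length ≤ (repN a.length c).length := by
    rw [repN_length]
    have : 1 ≤ c.length := List.length_pos_iff.mpr hc
    calc a.length = a.length * 1 := (mul_one _).symm
      _ ≤ a.length * c.length := Nat.mul_le_mul_left _ this
  have h1 : a <+: repN a.length c ++ a := by
    rw [← comm_repN h]; exact List.prefix_append _ _
  exact List.prefix_of_prefix_length_le h1 (List.prefix_append _ _) hlen

/-- two words commuting with a common nonempty word commute -/
private lemma comm_trans {Γ : Type*} {c : List Γ} (hc : c ≠ []) :
    ∀ a b : List Γ, a ++ c = c ++ a → b ++ c = c ++ b → a ++ b = b ++ a := by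
  suffices H : ∀ n (a b : List Γ), a.length + b.length = n → a.length ≤ b.length →
      a ++ c = c ++ a → b ++ c = c ++ b → a ++ b = b ++ a by
    intro a b ha hb
    rcases le_total a.length b.length with hle | hle
    · exact H _ a b rfl hle ha hb
    · exact (H _ b a rfl hle hb ha).symm
  intro n
  induction n using Nat.strong_induction_on with
  | _ n ih =>
  intro a b hn hle ha hb
  subst hn
  · rcases eq_or_ne a [] with rfl | hane
    · simp
    · -- a and b are both prefixes of repN b.length c, so a <+: b
      have hca : a <+: repN b.length c := by
        have h1 : a <+: repN b.length c ++ a := by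
          rw [← comm_repN ha]; exact List.prefix_append _ _
        refine List.prefix_of_prefix_length_le h1 (List.prefix_append _ _) ?_
        rw [repN_length]
        have : 1 ≤ c.length := List.length_pos_iff.mpr hc
        calc a.length ≤ b.length := hle
          _ = b.length * 1 := (mul_one _).symm
          _ ≤ b.length * c.length := Nat.mul_le_mul_left _ this
      have hcb : b <+: repN b.length c := prefix_repN hb hc
      have hab : a <+: b := List.prefix_of_prefix_length_le hca hcb hle
      obtain ⟨d, rfl⟩ := hab
      -- from (a++d)++c = c++(a++d) and a++c = c++a get d++c = c++d
      have hd : d ++ c = c ++ d := by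
        have : a ++ (d ++ c) = a ++ (c ++ d) := by
          rw [← List.append_assoc, hb, ← List.append_assoc, ← ha, List.append_assoc]
        exact List.append_cancel_left this
      have hpos : 0 < a.length := List.length_pos_iff.mpr hane
      have hlt : a.length + d.length < a.length + (a ++ d).length := by
        simp only [List.length_append]; omega
      have had : a ++ d = d ++ a := by
        rcases le_total a.length d.length with h | h
        · exact ih (a.length + d.length) hlt a d rfl h ha hd
        · exact (ih (d.length + a.length) (by omega) d a rfl h hd ha).symm
      calc a ++ (a ++ d) = a ++ (d ++ a) := by rw [had]
        _ = (a ++ d) ++ a := by rw [← List.append_assoc]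

/-- the main theorem under the assumption `|u| ≤ |u'|` -/
private lemma main_le {Γ : Type*} (u v u' v' x₁ x₂ x₃ : List Γ)
    (hcomm : x₂ ++ x₃ = x₃ ++ x₂) (hx₃ : x₃ ≠ [])
    (h₂ : u ++ x₁ ++ x₂ ++ v = u' ++ x₁ ++ x₂ ++ v')
    (h₃ : u ++ x₁ ++ x₂ ++ x₃ ++ v = u' ++ x₁ ++ x₂ ++ x₃ ++ v')
    (hle : u.length ≤ u'.length) :
    u ++ x₁ ++ v = u' ++ x₁ ++ v' := by
  -- u is a prefix of u'
  have huu' : u <+: u' := by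
    have h1 : u <+: u' ++ (x₁ ++ x₂ ++ v') := by
      refine ⟨x₁ ++ x₂ ++ v, ?_⟩
      simpa [List.append_assoc] using h₂
    exact List.prefix_of_prefix_length_le h1 (List.prefix_append _ _) hle
  obtain ⟨t, rfl⟩ := huu'
  simp only [List.append_assoc, List.append_cancel_left_eq] at h₂ h₃ ⊢
  -- h₂ : x₁ ++ (x₂ ++ v) = t ++ (x₁ ++ (x₂ ++ v'))
  -- decompose v = s ++ r with |s| = |t|
  have hvlen : t.length ≤ v.length := by
    have := congrArg List.length h₂
    simp only [List.length_append] at this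
    omega
  set s := v.take t.length with hs
  set r := v.drop t.length with hr
  have hv : v = s ++ r := (List.take_append_drop _ _).symm
  have hslen : s.length = t.length := by
    rw [hs, List.length_take]; omega
  -- from h₂ : (x₁++x₂) ++ s = t ++ (x₁++x₂)  and  r = v'
  have key₂ : (x₁ ++ x₂ ++ s = t ++ (x₁ ++ x₂)) ∧ r = v' := by
    have h2' : (x₁ ++ x₂ ++ s) ++ r = (t ++ (x₁ ++ x₂)) ++ v' := by
      rw [hv] at h₂; simpa [List.append_assoc] using h₂
    have hl : (x₁ ++ x₂ ++ s).length = (t ++ (x₁ ++ x₂)).length := by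
      simp [List.length_append, hslen]; omega
    exact List.append_inj h2' hl
  have key₃ : x₁ ++ x₂ ++ x₃ ++ s = t ++ (x₁ ++ x₂ ++ x₃) := by
    have h3' : (x₁ ++ x₂ ++ x₃ ++ s) ++ r = (t ++ (x₁ ++ x₂ ++ x₃)) ++ v' := by
      rw [hv] at h₃; simpa [List.append_assoc] using h₃
    have hl : (x₁ ++ x₂ ++ x₃ ++ s).length = (t ++ (x₁ ++ x₂ ++ x₃)).length := by
      simp [List.length_append, hslen]; omega
    exact (List.append_inj h3' hl).1
  obtain ⟨p₂, rfl⟩ := key₂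
  -- s commutes with x₃
  have hs₃ : s ++ x₃ = x₃ ++ s := by
    have e1 : x₁ ++ x₂ ++ (s ++ x₃) = t ++ (x₁ ++ x₂) ++ x₃ := by
      rw [← List.append_assoc, p₂]
    have e2 : x₁ ++ x₂ ++ (x₃ ++ s) = t ++ (x₁ ++ x₂) ++ x₃ := by
      simpa [List.append_assoc] using key₃
    have := e1.trans e2.symm
    exact List.append_cancel_left this
  -- s commutes with x₂
  have hs₂ : s ++ x₂ = x₂ ++ s := comm_trans hx₃ s x₂ hs₃ hcomm
  -- x₁ ++ s = t ++ x₁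
  have hx₁s : x₁ ++ s = t ++ x₁ := by
    have e : (x₁ ++ s) ++ x₂ = (t ++ x₁) ++ x₂ := by
      calc (x₁ ++ s) ++ x₂ = x₁ ++ (s ++ x₂) := by rw [List.append_assoc]
        _ = x₁ ++ (x₂ ++ s) := by rw [hs₂]
        _ = x₁ ++ x₂ ++ s := by rw [List.append_assoc]
        _ = t ++ (x₁ ++ x₂) := p₂
        _ = (t ++ x₁) ++ x₂ := by simp [List.append_assoc]
    exact List.append_cancel_right e
  calc x₁ ++ v = x₁ ++ (s ++ r) := by rw [← hv]
    _ = (x₁ ++ s) ++ r := by rw [List.append_assoc]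
    _ = (t ++ x₁) ++ r := by rw [hx₁s]
    _ = t ++ (x₁ ++ r) := by rw [List.append_assoc]

/-- If `x₂·x₃ = x₃·x₂`, `x₃ ≠ ε`, `u·x₁·x₂·v = u'·x₁·x₂·v'` and
`u·x₁·x₂·x₃·v = u'·x₁·x₂·x₃·v'`, then `u·x₁·v = u'·x₁·v'`. -/
theorem first_eq_of_last_two {Γ : Type*} (u v u' v' x₁ x₂ x₃ : List Γ)
    (hcomm : x₂ ++ x₃ = x₃ ++ x₂) (hx₃ : x₃ ≠ [])
    (h₂ : u ++ x₁ ++ x₂ ++ v = u' ++ x₁ ++ x₂ ++ v')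
    (h₃ : u ++ x₁ ++ x₂ ++ x₃ ++ v = u' ++ x₁ ++ x₂ ++ x₃ ++ v') :
    u ++ x₁ ++ v = u' ++ x₁ ++ v' := by
  rcases le_total u.length u'.length with hle | hle
  · exact main_le u v u' v' x₁ x₂ x₃ hcomm hx₃ h₂ h₃ hle
  · exact (main_le u' v' u v x₁ x₂ x₃ hcomm hx₃ h₂.symm h₃.symm hle).symm
end

section
/- Let Γ be an alphabet, c ≠ d two distinct letters of Γ, k ≥ 1, and let u₀,…,u_k, u'₀,…,u'_k, w₁,…,w_k, z₁,…,z_k be words over Γ. For a tuple s = (s₁,…,s_k) of letters, write E(s) for the equation u₀·w₁·s₁·z₁·u₁·w₂·s₂·z₂·u₂ ⋯ w_k·s_k·z_k·u_k = u'₀·w₁·s₁·z₁·u'₁ ⋯ w_k·s_k·z_k·u'_k. If E(s) holds for the tuple s = (c,c,…,c) and also for each of the k tuples obtained from (c,…,c) by replacing the j-th letter by d (for each j ∈ {1,…,k}), then uᵢ = u'ᵢ for every i ∈ {0,…,k}. -/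
/-!
Peel off the first block `u₀·w₁·s₁`. The all-`c` equation and the equation with `s₁ = d`
differ only in that letter, and two words `x·c·A = x'·c·A'`, `x·d·A = x'·d·A'` with `c ≠ d`
force `|x| = |x'|` (otherwise the shorter prefix would see both `c` and `d` at the same
position of the longer one). Hence `u₀ = u'₀`, and what remains is an instance of the same
problem with `k - 1` blocks and unknowns `z₁·u₁, u₂, …, u_k`, for which the remaining flips
still hold.
-/

/-- One side of the equation `E(s)`: the word
`u₀·w₁·s₁·z₁·u₁·w₂·s₂·z₂·u₂ ⋯ w_k·s_k·z_k·u_k`, where `s = (s₁,…,s_k)` is a tuple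
of letters. -/
def eqSide {Γ : Type*} {k : ℕ} (u : Fin (k + 1) → List Γ) (w z : Fin k → List Γ)
    (s : Fin k → Γ) : List Γ :=
  u 0 ++ (List.finRange k).flatMap (fun j => w j ++ s j :: (z j ++ u j.succ))

section

variable {Γ : Type*}

namespace List

theorem getElem?_eq_of_append_cons_eq {x x' A B : List Γ} {a : Γ}
    (h : x ++ a :: A = x' ++ B) (hlt : x.length < x'.length) : x'[x.length]? = some a := by
  simpa [getElem?_append_left hlt] using (congrArg (·[x.length]?) h).symm

theorem eq_of_append_cons_eq_of_length_lt {x x' A A' B B' : List Γ} {c d : Γ}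
    (hc : x ++ c :: A = x' ++ B) (hd : x ++ d :: A' = x' ++ B')
    (hlt : x.length < x'.length) : c = d :=
  Option.some_injective _ <|
    (getElem?_eq_of_append_cons_eq hc hlt).symm.trans (getElem?_eq_of_append_cons_eq hd hlt)

theorem eq_and_eq_of_append_cons_eq_of_ne {c d : Γ} (hcd : c ≠ d) {x x' A A' : List Γ}
    (hc : x ++ c :: A = x' ++ c :: A') (hd : x ++ d :: A = x' ++ d :: A') :
    x = x' ∧ A = A' := by
  have hlen : x.length = x'.length := by
    rcases lt_trichotomy x.length x'.length with hlt | heq | hgt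
    · exact absurd (eq_of_append_cons_eq_of_length_lt hc hd hlt) hcd
    · exact heq
    · exact absurd (eq_of_append_cons_eq_of_length_lt hc.symm hd.symm hgt) hcd
  obtain ⟨hx, hA⟩ := append_inj hc hlen
  exact ⟨hx, cons_injective hA⟩

end List

variable {k : ℕ}

def shiftUnknowns (z₀ : List Γ) (u : Fin (k + 2) → List Γ) : Fin (k + 1) → List Γ :=
  Fin.cons (z₀ ++ u 1) (Fin.tail (Fin.tail u))

theorem eq_of_shiftUnknowns_eq {z₀ : List Γ} {u u' : Fin (k + 2) → List Γ}
    (h₀ : u 0 = u' 0) (h : shiftUnknowns z₀ u = shiftUnknowns z₀ u') : u = u' := by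
  obtain ⟨h₁, htail⟩ := Fin.cons_inj.mp h
  exact funext <| Fin.cases h₀ <| Fin.cases (List.append_cancel_left h₁) (congrFun htail)

theorem eqSide_succ (u : Fin (k + 2) → List Γ) (w z : Fin (k + 1) → List Γ)
    (s : Fin (k + 1) → Γ) :
    eqSide u w z s = u 0 ++ w 0 ++ s 0 ::
      eqSide (shiftUnknowns (z 0) u) (Fin.tail w) (Fin.tail z) (Fin.tail s) := by
  simp [eqSide, shiftUnknowns, Fin.tail, List.finRange_succ, List.flatMap_map]

theorem holds_on_flips_succ {c d : Γ} (hcd : c ≠ d) {u u' : Fin (k + 2) → List Γ}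
    {w z : Fin (k + 1) → List Γ}
    (hc : eqSide u w z (fun _ => c) = eqSide u' w z (fun _ => c))
    (hd : ∀ j : Fin (k + 1),
      eqSide u w z (Function.update (fun _ => c) j d)
        = eqSide u' w z (Function.update (fun _ => c) j d)) :
    u 0 = u' 0 ∧
      eqSide (shiftUnknowns (z 0) u) (Fin.tail w) (Fin.tail z) (fun _ => c)
        = eqSide (shiftUnknowns (z 0) u') (Fin.tail w) (Fin.tail z) (fun _ => c) ∧
      ∀ j : Fin k,
        eqSide (shiftUnknowns (z 0) u) (Fin.tail w) (Fin.tail z) (Function.update (fun _ => c) j d)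
          = eqSide (shiftUnknowns (z 0) u') (Fin.tail w) (Fin.tail z)
              (Function.update (fun _ => c) j d) := by
  have hd₀ := hd 0
  rw [eqSide_succ, eqSide_succ, Function.update_self, Fin.tail_update_zero] at hd₀
  rw [eqSide_succ, eqSide_succ] at hc
  obtain ⟨hhead, htail⟩ := List.eq_and_eq_of_append_cons_eq_of_ne hcd hc hd₀
  refine ⟨List.append_cancel_right hhead, htail, fun j => ?_⟩
  have hdj := hd j.succ
  rw [eqSide_succ, eqSide_succ, Fin.tail_update_succ, hhead,
    Function.update_of_ne (Fin.succ_ne_zero j).symm] at hdj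
  exact List.cons_injective (List.append_cancel_left hdj)

end

theorem eq_of_holds_on_flips_general {Γ : Type*} (k : ℕ) (c d : Γ) (hcd : c ≠ d)
    (u u' : Fin (k + 1) → List Γ) (w z : Fin k → List Γ)
    (hc : eqSide u w z (fun _ => c) = eqSide u' w z (fun _ => c))
    (hd : ∀ j : Fin k,
      eqSide u w z (Function.update (fun _ => c) j d)
        = eqSide u' w z (Function.update (fun _ => c) j d)) :
    ∀ i, u i = u' i := by
  induction k with
  | zero =>
    intro i
    rw [Fin.fin_one_eq_zero i]
    simpa [eqSide] using hc
  | succ k ih =>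
    obtain ⟨h₀, hc', hd'⟩ := holds_on_flips_succ hcd hc hd
    exact congrFun (eq_of_shiftUnknowns_eq h₀ (funext (ih _ _ _ _ hc' hd')))

/-- If the equation `E(s)` (with unknowns `u₀,…,u_k` on the left and `u'₀,…,u'_k` on the
right) holds for the tuple `(c,…,c)` and for each of the `k` tuples obtained from `(c,…,c)`
by replacing the `j`-th letter by `d`, where `c ≠ d`, then `uᵢ = u'ᵢ` for all `i`. -/
theorem eq_of_holds_on_flips {Γ : Type*} (k : ℕ) (hk : 1 ≤ k) (c d : Γ) (hcd : c ≠ d)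
    (u u' : Fin (k + 1) → List Γ) (w z : Fin k → List Γ)
    (hc : eqSide u w z (fun _ => c) = eqSide u' w z (fun _ => c))
    (hd : ∀ j : Fin k,
      eqSide u w z (Function.update (fun _ => c) j d)
        = eqSide u' w z (Function.update (fun _ => c) j d)) :
    ∀ i, u i = u' i :=
  eq_of_holds_on_flips_general k c d hcd u u' w z hc hd
end
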